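/- Let (H, R) be a quasitriangular Hopf algebra with antipode γ, and write R = Σ R⁽¹⁾⊗R⁽²⁾. Define μ = Σ R⁽¹⁾·γ(R⁽²⁾) ∈ H. Then μ is invertible and μ·γ²(x) = x·μ for all x ∈ H, i.e. conjugation by μ implements the inverse of the squared antipode. -/

import Mathlib

open TensorProduct

noncomputable section

namespace Stmt5

variable (k H : Type*) [CommRing k] [Ring H] [HopfAlgebra k H]

/-- The coproduct of `H` as an algebra map. -/
def Δ : H →ₐ[k] H ⊗[k] H := Bialgebra.comulAlgHom k H

/-- The counit of `H` as an algebra map. -/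
def ε : H →ₐ[k] k := Bialgebra.counitAlgHom k H

/-- The antipode of `H`. -/
def γ : H →ₗ[k] H := HopfAlgebra.antipode (R := k)

/-- Embedding of `H ⊗ H` into legs 1,2 of `H ⊗ (H ⊗ H)`. -/
def ι12 : H ⊗[k] H →ₐ[k] H ⊗[k] (H ⊗[k] H) :=
  Algebra.TensorProduct.map (AlgHom.id k H) Algebra.TensorProduct.includeLeft

/-- Embedding of `H ⊗ H` into legs 1,3 of `H ⊗ (H ⊗ H)`. -/
def ι13 : H ⊗[k] H →ₐ[k] H ⊗[k] (H ⊗[k] H) :=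
  Algebra.TensorProduct.map (AlgHom.id k H) Algebra.TensorProduct.includeRight

/-- Embedding of `H ⊗ H` into legs 2,3 of `H ⊗ (H ⊗ H)`. -/
def ι23 : H ⊗[k] H →ₐ[k] H ⊗[k] (H ⊗[k] H) :=
  Algebra.TensorProduct.includeRight

/-- `Δ ⊗ id`, landing in `H ⊗ (H ⊗ H)`. -/
def comulId : H ⊗[k] H →ₐ[k] H ⊗[k] (H ⊗[k] H) :=
  (Algebra.TensorProduct.assoc k k k H H H).toAlgHom.comp
    (Algebra.TensorProduct.map (Δ k H) (AlgHom.id k H))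

/-- `id ⊗ Δ`, landing in `H ⊗ (H ⊗ H)`. -/
def idComul : H ⊗[k] H →ₐ[k] H ⊗[k] (H ⊗[k] H) :=
  Algebra.TensorProduct.map (AlgHom.id k H) (Δ k H)

/-- The element `μ = Σ R⁽¹⁾ γ(R⁽²⁾)`. -/
def μel (R : H ⊗[k] H) : H :=
  LinearMap.mul' k H ((TensorProduct.map LinearMap.id (γ k H)) R)

open Coalgebra

local notation "γ'" => HopfAlgebra.antipode (R := k) (A := H)

lemma repr_eps_left {a : H} (r : Repr k a (H × H)) :
    ∑ i ∈ r.index, counit (R := k) (r.left i) • r.right i = a := by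
  have h := congrArg (TensorProduct.lid k H) (Coalgebra.sum_counit_tmul_eq r)
  rw [map_sum] at h
  simp only [TensorProduct.lid_tmul, one_smul] at h
  exact h

lemma repr_eps_right {a : H} (r : Repr k a (H × H)) :
    ∑ i ∈ r.index, counit (R := k) (r.right i) • r.left i = a := by
  have h := congrArg (TensorProduct.rid k H) (Coalgebra.sum_tmul_counit_eq r)
  rw [map_sum] at h
  simp only [TensorProduct.rid_tmul, one_smul] at h
  exact h

lemma sum_trip {M : Type*} [AddCommMonoid M] [Module k M] {a : H} (r : Repr k a (H × H))
    (rl : (i : H × H) → Repr k (r.left i) (H × H)) (rr : (i : H × H) → Repr k (r.right i) (H × H))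
    (F : H ⊗[k] (H ⊗[k] H) →ₗ[k] M) :
    ∑ i ∈ r.index, ∑ j ∈ (rl i).index,
      F ((rl i).left j ⊗ₜ[k] ((rl i).right j ⊗ₜ[k] r.right i))
    = ∑ i ∈ r.index, ∑ j ∈ (rr i).index,
      F (r.left i ⊗ₜ[k] ((rr i).left j ⊗ₜ[k] (rr i).right j)) := by
  have h := congrArg F (Coalgebra.sum_tmul_tmul_eq r rl rr)
  simpa [map_sum] using h

def mulRepr {a b : H} (ra : Repr k a (H × H)) (rb : Repr k b (H × H)) : Repr k (a * b) ((H × H) × (H × H)) where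
  index := ra.index ×ˢ rb.index
  left := fun ij => ra.left ij.1 * rb.left ij.2
  right := fun ij => ra.right ij.1 * rb.right ij.2
  eq := by
    rw [Bialgebra.comul_mul, ← ra.eq, ← rb.eq, Finset.sum_mul_sum, Finset.sum_product]
    simp [Algebra.TensorProduct.tmul_mul_tmul]

lemma sum_antipode_mul_mul {a b : H} (ra : Repr k a (H × H)) (rb : Repr k b (H × H)) :
    ∑ p ∈ ra.index, ∑ q ∈ rb.index,
      γ' (ra.left p * rb.left q) * (ra.right p * rb.right q)
    = algebraMap k H (counit (R := k) a * counit (R := k) b) := by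
  have h := HopfAlgebra.sum_antipode_mul_eq_algebraMap_counit (R := k) (mulRepr k H ra rb)
  simp only [mulRepr, Finset.sum_product, Bialgebra.counit_mul] at h
  exact h

lemma sum_swap4 {β : Type*} [AddCommMonoid β] {α₁ α₃ : Type*} {κ : α₁ → Type*}
    {κ' : α₃ → Type*} (s₁ : Finset α₁) (s₂ : (i : α₁) → Finset (κ i)) (s₃ : Finset α₃)
    (s₄ : (m : α₃) → Finset (κ' m)) (t : (i : α₁) → κ i → (m : α₃) → κ' m → β) :
    (∑ i ∈ s₁, ∑ p ∈ s₂ i, ∑ m ∈ s₃, ∑ q ∈ s₄ m, t i p m q)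
    = ∑ m ∈ s₃, ∑ q ∈ s₄ m, ∑ i ∈ s₁, ∑ p ∈ s₂ i, t i p m q := by
  calc (∑ i ∈ s₁, ∑ p ∈ s₂ i, ∑ m ∈ s₃, ∑ q ∈ s₄ m, t i p m q)
      = ∑ i ∈ s₁, ∑ m ∈ s₃, ∑ p ∈ s₂ i, ∑ q ∈ s₄ m, t i p m q :=
        Finset.sum_congr rfl (fun i _ => Finset.sum_comm)
    _ = ∑ m ∈ s₃, ∑ i ∈ s₁, ∑ p ∈ s₂ i, ∑ q ∈ s₄ m, t i p m q := Finset.sum_comm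
    _ = ∑ m ∈ s₃, ∑ i ∈ s₁, ∑ q ∈ s₄ m, ∑ p ∈ s₂ i, t i p m q :=
        Finset.sum_congr rfl (fun m _ => Finset.sum_congr rfl
          (fun i _ => Finset.sum_comm))
    _ = ∑ m ∈ s₃, ∑ q ∈ s₄ m, ∑ i ∈ s₁, ∑ p ∈ s₂ i, t i p m q :=
        Finset.sum_congr rfl (fun m _ => Finset.sum_comm)

private noncomputable def ΛI (c₁ c₂ : H) : H ⊗[k] (H ⊗[k] H) →ₗ[k] H :=
  LinearMap.mul' k H ∘ₗ
    TensorProduct.map ((γ') ∘ₗ LinearMap.mulRight k c₁)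
      (LinearMap.mul' k H ∘ₗ TensorProduct.map (LinearMap.mulRight k c₂) (γ'))

@[simp] lemma ΛI_tmul (c₁ c₂ x y z : H) :
    ΛI k H c₁ c₂ (x ⊗ₜ[k] (y ⊗ₜ[k] z)) = γ' (x * c₁) * ((y * c₂) * γ' z) := by
  simp [ΛI]

private noncomputable def ΛII (d₁ d₂ d₃ : H) : H ⊗[k] (H ⊗[k] H) →ₗ[k] H :=
  LinearMap.mul' k H ∘ₗ
    TensorProduct.map (LinearMap.mulRight k d₂ ∘ₗ (γ') ∘ₗ LinearMap.mulLeft k d₁)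
      (LinearMap.mul' k H ∘ₗ TensorProduct.map LinearMap.id (LinearMap.mulRight k d₃ ∘ₗ (γ')))

@[simp] lemma ΛII_tmul (d₁ d₂ d₃ x y z : H) :
    ΛII k H d₁ d₂ d₃ (x ⊗ₜ[k] (y ⊗ₜ[k] z)) = (γ' (d₁ * x) * d₂) * (y * (γ' z * d₃)) := by
  simp [ΛII]


theorem antipode_mul (a b : H) : γ' (a * b) = γ' b * γ' a := by
  have ra := Repr.arbitrary k a
  have rb := Repr.arbitrary k b
  have rla : (i : H × H) → Repr k (ra.left i) (H × H) := fun i => Repr.arbitrary k _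
  have rra : (i : H × H) → Repr k (ra.right i) (H × H) := fun i => Repr.arbitrary k _
  have rlb : (m : H × H) → Repr k (rb.left m) (H × H) := fun m => Repr.arbitrary k _
  have rrb : (m : H × H) → Repr k (rb.right m) (H × H) := fun m => Repr.arbitrary k _
  -- step 1 : γ' (a*b) = X_R
  have hq : ∀ i p m, (∑ q ∈ (rrb m).index,
      γ' (ra.left i * rb.left m) *
        (((rra i).left p * ((rrb m).left q * γ' ((rrb m).right q))) * γ' ((rra i).right p)))
      = counit (R := k) (rb.right m) •
          (γ' (ra.left i * rb.left m) * ((rra i).left p * γ' ((rra i).right p))) := by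
    intro i p m
    simp only [← Finset.mul_sum, ← Finset.sum_mul]
    rw [HopfAlgebra.sum_mul_antipode_eq_algebraMap_counit (rrb m), ← Algebra.commutes, ← Algebra.smul_def]
    simp [smul_mul_assoc, mul_smul_comm]
  have hm : ∀ i p, (∑ m ∈ rb.index, counit (R := k) (rb.right m) •
        (γ' (ra.left i * rb.left m) * ((rra i).left p * γ' ((rra i).right p))))
      = γ' (ra.left i * b) * ((rra i).left p * γ' ((rra i).right p)) := by
    intro i p
    conv_rhs => rw [← repr_eps_right k H rb, Finset.mul_sum, map_sum, Finset.sum_mul]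
    refine Finset.sum_congr rfl (fun m _ => ?_)
    simp [mul_smul_comm, map_smul, smul_mul_assoc]
  have hp : ∀ i, (∑ p ∈ (rra i).index,
        γ' (ra.left i * b) * ((rra i).left p * γ' ((rra i).right p)))
      = counit (R := k) (ra.right i) • γ' (ra.left i * b) := by
    intro i
    rw [← Finset.mul_sum, HopfAlgebra.sum_mul_antipode_eq_algebraMap_counit (rra i), ← Algebra.commutes,
      ← Algebra.smul_def]
  have step1 : γ' (a * b) = ∑ i ∈ ra.index, ∑ p ∈ (rra i).index, ∑ m ∈ rb.index,
      ∑ q ∈ (rrb m).index,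
      γ' (ra.left i * rb.left m) *
        (((rra i).left p * ((rrb m).left q * γ' ((rrb m).right q))) * γ' ((rra i).right p)) := by
    simp only [hq, hm, hp]
    conv_lhs => rw [← repr_eps_right k H ra, Finset.sum_mul, map_sum]
    refine Finset.sum_congr rfl (fun i _ => ?_)
    simp [smul_mul_assoc, map_smul]
  -- step 2 : switch the a-nesting
  have step2 := sum_trip k H ra rla rra
    (∑ m ∈ rb.index, ∑ q ∈ (rrb m).index,
      ΛI k H (rb.left m) ((rrb m).left q * γ' ((rrb m).right q)))
  simp only [LinearMap.sum_apply, ΛI_tmul, mul_assoc] at step2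
  -- step 3 : switch the b-nesting
  have step3 := sum_trip k H rb rlb rrb
    (∑ i ∈ ra.index, ∑ p ∈ (rla i).index,
      ΛII k H ((rla i).left p) ((rla i).right p) (γ' (ra.right i)))
  simp only [LinearMap.sum_apply, ΛII_tmul, mul_assoc] at step3
  -- step 4 : evaluate X_L
  have hpq : ∀ i m, (∑ q ∈ (rlb m).index, ∑ p ∈ (rla i).index,
        γ' ((rla i).left p * (rlb m).left q) *
          ((rla i).right p * ((rlb m).right q * (γ' (rb.right m) * γ' (ra.right i)))))
      = (counit (R := k) (ra.left i) * counit (R := k) (rb.left m)) •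
          (γ' (rb.right m) * γ' (ra.right i)) := by
    intro i m
    rw [Finset.sum_comm]
    calc (∑ p ∈ (rla i).index, ∑ q ∈ (rlb m).index,
            γ' ((rla i).left p * (rlb m).left q) *
              ((rla i).right p * ((rlb m).right q * (γ' (rb.right m) * γ' (ra.right i)))))
        = (∑ p ∈ (rla i).index, ∑ q ∈ (rlb m).index,
            γ' ((rla i).left p * (rlb m).left q) * ((rla i).right p * (rlb m).right q)) *
            (γ' (rb.right m) * γ' (ra.right i)) := by
          rw [Finset.sum_mul]
          refine Finset.sum_congr rfl (fun p _ => ?_)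
          rw [Finset.sum_mul]
          refine Finset.sum_congr rfl (fun q _ => ?_)
          simp [mul_assoc]
      _ = algebraMap k H (counit (R := k) (ra.left i) * counit (R := k) (rb.left m)) *
            (γ' (rb.right m) * γ' (ra.right i)) := by
          rw [sum_antipode_mul_mul k H (rla i) (rlb m)]
      _ = (counit (R := k) (ra.left i) * counit (R := k) (rb.left m)) •
            (γ' (rb.right m) * γ' (ra.right i)) := (Algebra.smul_def _ _).symm
  have hm2 : ∀ i, (∑ m ∈ rb.index,
        (counit (R := k) (ra.left i) * counit (R := k) (rb.left m)) •
          (γ' (rb.right m) * γ' (ra.right i)))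
      = counit (R := k) (ra.left i) • (γ' b * γ' (ra.right i)) := by
    intro i
    simp only [mul_smul]
    rw [← Finset.smul_sum]
    congr 1
    conv_rhs => rw [← repr_eps_left k H rb, map_sum, Finset.sum_mul]
    refine Finset.sum_congr rfl (fun m _ => ?_)
    simp [map_smul, smul_mul_assoc]
  have hi2 : (∑ i ∈ ra.index, counit (R := k) (ra.left i) • (γ' b * γ' (ra.right i)))
      = γ' b * γ' a := by
    conv_rhs => rw [← repr_eps_left k H ra, map_sum, Finset.mul_sum]
    refine Finset.sum_congr rfl (fun i _ => ?_)
    simp [map_smul, mul_smul_comm]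
  -- assemble
  calc γ' (a * b)
      = ∑ i ∈ ra.index, ∑ p ∈ (rra i).index, ∑ m ∈ rb.index, ∑ q ∈ (rrb m).index,
          γ' (ra.left i * rb.left m) *
            (((rra i).left p * ((rrb m).left q * γ' ((rrb m).right q))) *
              γ' ((rra i).right p)) := step1
    _ = ∑ i ∈ ra.index, ∑ p ∈ (rra i).index, ∑ m ∈ rb.index, ∑ q ∈ (rrb m).index,
          γ' (ra.left i * rb.left m) *
            ((rra i).left p * ((rrb m).left q *
              (γ' ((rrb m).right q) * γ' ((rra i).right p)))) := by
        refine Finset.sum_congr rfl fun i _ => Finset.sum_congr rfl fun p _ =>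
          Finset.sum_congr rfl fun m _ => Finset.sum_congr rfl fun q _ => by
            simp [mul_assoc]
    _ = ∑ i ∈ ra.index, ∑ p ∈ (rla i).index, ∑ m ∈ rb.index, ∑ q ∈ (rrb m).index,
          γ' ((rla i).left p * rb.left m) *
            ((rla i).right p * ((rrb m).left q *
              (γ' ((rrb m).right q) * γ' (ra.right i)))) := step2.symm
    _ = ∑ m ∈ rb.index, ∑ q ∈ (rrb m).index, ∑ i ∈ ra.index, ∑ p ∈ (rla i).index,
          γ' ((rla i).left p * rb.left m) *
            ((rla i).right p * ((rrb m).left q *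
              (γ' ((rrb m).right q) * γ' (ra.right i)))) := sum_swap4 _ _ _ _ _
    _ = ∑ m ∈ rb.index, ∑ q ∈ (rlb m).index, ∑ i ∈ ra.index, ∑ p ∈ (rla i).index,
          γ' ((rla i).left p * (rlb m).left q) *
            ((rla i).right p * ((rlb m).right q *
              (γ' (rb.right m) * γ' (ra.right i)))) := step3.symm
    _ = ∑ m ∈ rb.index, ∑ i ∈ ra.index, ∑ q ∈ (rlb m).index, ∑ p ∈ (rla i).index,
          γ' ((rla i).left p * (rlb m).left q) *
            ((rla i).right p * ((rlb m).right q *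
              (γ' (rb.right m) * γ' (ra.right i)))) :=
        Finset.sum_congr rfl (fun m _ => Finset.sum_comm)
    _ = ∑ i ∈ ra.index, ∑ m ∈ rb.index, ∑ q ∈ (rlb m).index, ∑ p ∈ (rla i).index,
          γ' ((rla i).left p * (rlb m).left q) *
            ((rla i).right p * ((rlb m).right q *
              (γ' (rb.right m) * γ' (ra.right i)))) := Finset.sum_comm
    _ = γ' b * γ' a := by
        simp only [hpq, hm2]
        exact hi2
lemma antipode_one : γ' (1 : H) = 1 := by
  have h := HopfAlgebra.mul_antipode_rTensor_comul_apply (R := k) (A := H) 1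
  simpa [Algebra.TensorProduct.one_def] using h

lemma comulAlgHom_apply' (x : H) : Bialgebra.comulAlgHom k H x = comul (R := k) x := rfl
lemma counitAlgHom_apply' (x : H) : Bialgebra.counitAlgHom k H x = counit (R := k) x := rfl

/-- `id ⊗ ε` collapsed, as an algebra map. -/
noncomputable def pr1A : H ⊗[k] H →ₐ[k] H :=
  (Algebra.TensorProduct.rid k k H).toAlgHom.comp
    (Algebra.TensorProduct.map (AlgHom.id k H) (Bialgebra.counitAlgHom k H))

/-- `ε ⊗ id` collapsed, as an algebra map. -/
noncomputable def pr2A : H ⊗[k] H →ₐ[k] H :=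
  (Algebra.TensorProduct.lid k H).toAlgHom.comp
    (Algebra.TensorProduct.map (Bialgebra.counitAlgHom k H) (AlgHom.id k H))

@[simp] lemma pr1A_tmul (x y : H) : pr1A k H (x ⊗ₜ[k] y) = counit (R := k) y • x := by
  simp [pr1A, Algebra.TensorProduct.rid_tmul, counitAlgHom_apply']

@[simp] lemma pr2A_tmul (x y : H) : pr2A k H (x ⊗ₜ[k] y) = counit (R := k) x • y := by
  simp [pr2A, counitAlgHom_apply']

lemma pr1A_comul (x : H) : pr1A k H (comul (R := k) x) = x := by
  have h := congrArg (TensorProduct.rid k H) (Coalgebra.lTensor_counit_comul (R := k) x)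
  simp only [TensorProduct.rid_tmul, one_smul] at h
  conv_rhs => rw [← h]
  have : ∀ W : H ⊗[k] H, pr1A k H W = TensorProduct.rid k H ((Coalgebra.counit (R := k)).lTensor H W) := by
    intro W
    induction W using TensorProduct.induction_on with
    | zero => simp
    | tmul x y => simp [TensorProduct.rid_tmul]
    | add u v hu hv => simp [map_add, hu, hv]
  exact this _

lemma pr2A_comul (x : H) : pr2A k H (comul (R := k) x) = x := by
  have h := congrArg (TensorProduct.lid k H) (Coalgebra.rTensor_counit_comul (R := k) x)
  simp only [TensorProduct.lid_tmul, one_smul] at h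
  conv_rhs => rw [← h]
  have : ∀ W : H ⊗[k] H, pr2A k H W = TensorProduct.lid k H ((Coalgebra.counit (R := k)).rTensor H W) := by
    intro W
    induction W using TensorProduct.induction_on with
    | zero => simp
    | tmul x y => simp [TensorProduct.lid_tmul]
    | add u v hu hv => simp [map_add, hu, hv]
  exact this _

@[simp] lemma idComul_tmul (x y : H) :
    idComul k H (x ⊗ₜ[k] y) = x ⊗ₜ[k] comul (R := k) y := by
  simp [idComul, Δ, comulAlgHom_apply']

@[simp] lemma comulId_tmul (x y : H) :
    comulId k H (x ⊗ₜ[k] y)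
      = (Algebra.TensorProduct.assoc k k k H H H) (comul (R := k) x ⊗ₜ[k] y) := by
  simp [comulId, Δ, comulAlgHom_apply']

@[simp] lemma ι12_tmul (x y : H) : ι12 k H (x ⊗ₜ[k] y) = x ⊗ₜ[k] (y ⊗ₜ[k] 1) := by
  simp [ι12]

@[simp] lemma ι13_tmul (x y : H) : ι13 k H (x ⊗ₜ[k] y) = x ⊗ₜ[k] ((1 : H) ⊗ₜ[k] y) := by
  simp [ι13]

@[simp] lemma ι23_apply (V : H ⊗[k] H) : ι23 k H V = (1 : H) ⊗ₜ[k] V := by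
  simp [ι23, Algebra.TensorProduct.includeRight_apply]

lemma pr1A_R (R Rinv : H ⊗[k] H) (hRinv : R * Rinv = 1)
    (hR2 : idComul k H R = ι13 k H R * ι12 k H R) : pr1A k H R = 1 := by
  set Ψ := Algebra.TensorProduct.map (AlgHom.id k H) (pr1A k H) with hΨ
  have h1 : ∀ P : H ⊗[k] H, Ψ (idComul k H P) = P := by
    intro P
    induction P using TensorProduct.induction_on with
    | zero => simp
    | tmul x y =>
        rw [idComul_tmul, hΨ, Algebra.TensorProduct.map_tmul, pr1A_comul]
        rfl
    | add u v hu hv => rw [map_add, map_add, hu, hv]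
  have h2 : ∀ U : H ⊗[k] H, Ψ (ι13 k H U) = (pr1A k H U) ⊗ₜ[k] (1 : H) := by
    intro U
    induction U using TensorProduct.induction_on with
    | zero => simp
    | tmul x y =>
        rw [ι13_tmul, hΨ, Algebra.TensorProduct.map_tmul, pr1A_tmul]
        simp [Algebra.TensorProduct.one_def, TensorProduct.tmul_smul,
          TensorProduct.smul_tmul']
    | add u v hu hv => rw [map_add, map_add, hu, hv, ← TensorProduct.add_tmul, map_add]
  have h3 : ∀ V : H ⊗[k] H, Ψ (ι12 k H V) = V := by
    intro V
    induction V using TensorProduct.induction_on with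
    | zero => simp
    | tmul x y =>
        rw [ι12_tmul, hΨ, Algebra.TensorProduct.map_tmul, pr1A_tmul]
        simp
    | add u v hu hv => rw [map_add, map_add, hu, hv]
  have key := congrArg Ψ hR2
  rw [map_mul, h1, h2, h3] at key
  have h4 : (pr1A k H R ⊗ₜ[k] (1 : H)) = (1 : H ⊗[k] H) := by
    calc (pr1A k H R ⊗ₜ[k] (1 : H)) = (pr1A k H R ⊗ₜ[k] (1 : H)) * (R * Rinv) := by
          rw [hRinv, mul_one]
      _ = (((pr1A k H R ⊗ₜ[k] (1 : H)) * R)) * Rinv := by rw [mul_assoc]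
      _ = R * Rinv := by rw [← key]
      _ = 1 := hRinv
  have := congrArg (pr1A k H) h4
  simpa using this

lemma pr2A_R (R Rinv : H ⊗[k] H) (hRinv : R * Rinv = 1)
    (hR1 : comulId k H R = ι13 k H R * ι23 k H R) : pr2A k H R = 1 := by
  set χ := (Algebra.TensorProduct.lid k (H ⊗[k] H)).toAlgHom.comp
    (Algebra.TensorProduct.map (Bialgebra.counitAlgHom k H) (AlgHom.id k (H ⊗[k] H))) with hχ
  have hχt : ∀ (x : H) (W : H ⊗[k] H), χ (x ⊗ₜ[k] W) = counit (R := k) x • W := by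
    intro x W
    rw [hχ]
    simp [counitAlgHom_apply']
  have h1 : ∀ P : H ⊗[k] H, χ (comulId k H P) = P := by
    intro P
    induction P using TensorProduct.induction_on with
    | zero => simp
    | tmul x y =>
        rw [comulId_tmul]
        have sub : ∀ Q : H ⊗[k] H, χ ((Algebra.TensorProduct.assoc k k k H H H) (Q ⊗ₜ[k] y))
            = (pr2A k H Q) ⊗ₜ[k] y := by
          intro Q
          induction Q using TensorProduct.induction_on with
          | zero => simp
          | tmul q₁ q₂ =>
              rw [Algebra.TensorProduct.assoc_tmul, hχt, pr2A_tmul,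
                TensorProduct.smul_tmul']
          | add u v hu hv =>
              rw [TensorProduct.add_tmul, map_add, map_add, hu, hv, map_add,
                TensorProduct.add_tmul]
        rw [sub, pr2A_comul]
    | add u v hu hv => rw [map_add, map_add, hu, hv]
  have h2 : ∀ U : H ⊗[k] H, χ (ι13 k H U) = (1 : H) ⊗ₜ[k] pr2A k H U := by
    intro U
    induction U using TensorProduct.induction_on with
    | zero => simp
    | tmul u₁ u₂ =>
        rw [ι13_tmul, hχt, pr2A_tmul, TensorProduct.tmul_smul]
    | add u v hu hv => rw [map_add, map_add, hu, hv, map_add, TensorProduct.tmul_add]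
  have h3 : ∀ V : H ⊗[k] H, χ (ι23 k H V) = V := by
    intro V
    rw [ι23_apply, hχt]
    simp
  have key := congrArg χ hR1
  rw [map_mul, h1, h2, h3] at key
  have h4 : ((1 : H) ⊗ₜ[k] pr2A k H R) = (1 : H ⊗[k] H) := by
    calc ((1 : H) ⊗ₜ[k] pr2A k H R) = ((1 : H) ⊗ₜ[k] pr2A k H R) * (R * Rinv) := by
          rw [hRinv, mul_one]
      _ = (((1 : H) ⊗ₜ[k] pr2A k H R) * R) * Rinv := by rw [mul_assoc]
      _ = R * Rinv := by rw [← key]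
      _ = 1 := hRinv
  have := congrArg (pr2A k H) h4
  simpa using this
private noncomputable def Φ₁ : H ⊗[k] (H ⊗[k] H) →ₗ[k] H ⊗[k] H :=
  (TensorProduct.map (LinearMap.mul' k H ∘ₗ TensorProduct.map (γ') LinearMap.id)
    LinearMap.id) ∘ₗ (TensorProduct.assoc k H H H).symm.toLinearMap

@[simp] lemma Φ₁_tmul (x y z : H) :
    Φ₁ k H (x ⊗ₜ[k] (y ⊗ₜ[k] z)) = (γ' x * y) ⊗ₜ[k] z := by
  simp [Φ₁]

private noncomputable def Φ₂ : H ⊗[k] (H ⊗[k] H) →ₗ[k] H ⊗[k] H :=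
  TensorProduct.map LinearMap.id (LinearMap.mul' k H ∘ₗ TensorProduct.map LinearMap.id (γ'))

@[simp] lemma Φ₂_tmul (x y z : H) :
    Φ₂ k H (x ⊗ₜ[k] (y ⊗ₜ[k] z)) = x ⊗ₜ[k] (y * γ' z) := by
  simp [Φ₂]

lemma mul_rTensor_antipode (W : H ⊗[k] H) :
    LinearMap.mul' k H (TensorProduct.map (γ') LinearMap.id W)
      = LinearMap.mul' k H ((γ').rTensor H W) := rfl

lemma mul_lTensor_antipode (W : H ⊗[k] H) :
    LinearMap.mul' k H (TensorProduct.map LinearMap.id (γ') W)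
      = LinearMap.mul' k H ((γ').lTensor H W) := rfl

lemma mapSid_mul (R Rinv : H ⊗[k] H) (hRinv : R * Rinv = 1)
    (hR1 : comulId k H R = ι13 k H R * ι23 k H R) :
    (TensorProduct.map (γ') LinearMap.id R) * R = 1 := by
  have h1 : ∀ P : H ⊗[k] H, Φ₁ k H (comulId k H P) = (1 : H) ⊗ₜ[k] pr2A k H P := by
    intro P
    induction P using TensorProduct.induction_on with
    | zero => simp
    | tmul a b =>
        rw [comulId_tmul]
        have sub : ∀ Q : H ⊗[k] H, Φ₁ k H ((Algebra.TensorProduct.assoc k k k H H H) (Q ⊗ₜ[k] b))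
            = (LinearMap.mul' k H (TensorProduct.map (γ') LinearMap.id Q)) ⊗ₜ[k] b := by
          intro Q
          induction Q using TensorProduct.induction_on with
          | zero => simp
          | tmul q₁ q₂ => rw [Algebra.TensorProduct.assoc_tmul, Φ₁_tmul]; simp
          | add u v hu hv =>
              rw [TensorProduct.add_tmul, map_add, map_add, hu, hv, map_add, map_add,
                TensorProduct.add_tmul]
        rw [sub, mul_rTensor_antipode, HopfAlgebra.mul_antipode_rTensor_comul_apply,
          Algebra.algebraMap_eq_smul_one, TensorProduct.smul_tmul, pr2A_tmul]
    | add u v hu hv => rw [map_add, map_add, hu, hv, map_add, TensorProduct.tmul_add]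
  have h2 : ∀ U V : H ⊗[k] H, Φ₁ k H (ι13 k H U * ι23 k H V)
      = (TensorProduct.map (γ') LinearMap.id U) * V := by
    intro U V
    induction U using TensorProduct.induction_on with
    | zero => simp
    | tmul u₁ u₂ =>
        induction V using TensorProduct.induction_on with
        | zero => simp
        | tmul v₁ v₂ =>
            rw [ι13_tmul, ι23_apply, Algebra.TensorProduct.tmul_mul_tmul,
              Algebra.TensorProduct.tmul_mul_tmul, Φ₁_tmul]
            simp [Algebra.TensorProduct.tmul_mul_tmul]
        | add u v hu hv => rw [map_add, mul_add, map_add, hu, hv, mul_add]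
    | add u v hu hv => rw [map_add, add_mul, map_add, hu, hv, map_add, add_mul]
  have key := congrArg (Φ₁ k H) hR1
  rw [h1, h2, pr2A_R k H R Rinv hRinv hR1] at key
  rw [← key, Algebra.TensorProduct.one_def]

lemma mapSid_R (R Rinv : H ⊗[k] H) (hRinv : R * Rinv = 1)
    (hR1 : comulId k H R = ι13 k H R * ι23 k H R) :
    TensorProduct.map (γ') LinearMap.id R = Rinv := by
  calc TensorProduct.map (γ') LinearMap.id R
      = (TensorProduct.map (γ') LinearMap.id R) * (R * Rinv) := by rw [hRinv, mul_one]
    _ = ((TensorProduct.map (γ') LinearMap.id R) * R) * Rinv := by rw [mul_assoc]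
    _ = Rinv := by rw [mapSid_mul k H R Rinv hRinv hR1, one_mul]

lemma hex2_inv (R Rinv : H ⊗[k] H) (hRinv : R * Rinv = 1) (hRinv' : Rinv * R = 1)
    (hR2 : idComul k H R = ι13 k H R * ι12 k H R) :
    idComul k H Rinv = ι12 k H Rinv * ι13 k H Rinv := by
  have a1 : idComul k H R * idComul k H Rinv = 1 := by rw [← map_mul, hRinv, map_one]
  have a2 : ι13 k H Rinv * ι13 k H R = 1 := by rw [← map_mul, hRinv', map_one]
  have a3 : ι12 k H Rinv * ι12 k H R = 1 := by rw [← map_mul, hRinv', map_one]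
  have a4 : (ι12 k H Rinv * ι13 k H Rinv) * (ι13 k H R * ι12 k H R) = 1 := by
    calc (ι12 k H Rinv * ι13 k H Rinv) * (ι13 k H R * ι12 k H R)
        = ι12 k H Rinv * ((ι13 k H Rinv * ι13 k H R) * ι12 k H R) := by
          simp only [mul_assoc]
      _ = 1 := by rw [a2, one_mul, a3]
  calc idComul k H Rinv = 1 * idComul k H Rinv := (one_mul _).symm
    _ = ((ι12 k H Rinv * ι13 k H Rinv) * (ι13 k H R * ι12 k H R)) * idComul k H Rinv := by
        rw [a4]
    _ = (ι12 k H Rinv * ι13 k H Rinv) * (idComul k H R * idComul k H Rinv) := by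
        rw [← hR2]; simp only [mul_assoc]
    _ = ι12 k H Rinv * ι13 k H Rinv := by rw [a1, mul_one]

lemma mapidS_Rinv (R Rinv : H ⊗[k] H) (hRinv : R * Rinv = 1) (hRinv' : Rinv * R = 1)
    (hR2 : idComul k H R = ι13 k H R * ι12 k H R) :
    TensorProduct.map LinearMap.id (γ') Rinv = R := by
  have h1 : ∀ P : H ⊗[k] H, Φ₂ k H (idComul k H P) = (pr1A k H P) ⊗ₜ[k] (1 : H) := by
    intro P
    induction P using TensorProduct.induction_on with
    | zero => simp
    | tmul a b =>
        rw [idComul_tmul]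
        have : Φ₂ k H (a ⊗ₜ[k] comul (R := k) b)
            = a ⊗ₜ[k] LinearMap.mul' k H (TensorProduct.map LinearMap.id (γ')
                (comul (R := k) b)) := by simp [Φ₂]
        rw [this, mul_lTensor_antipode, HopfAlgebra.mul_antipode_lTensor_comul_apply,
          Algebra.algebraMap_eq_smul_one, TensorProduct.tmul_smul, pr1A_tmul]
        rw [TensorProduct.smul_tmul', TensorProduct.smul_tmul]
    | add u v hu hv => rw [map_add, map_add, hu, hv, map_add, TensorProduct.add_tmul]
  have h2 : ∀ U V : H ⊗[k] H, Φ₂ k H (ι12 k H U * ι13 k H V)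
      = U * (TensorProduct.map LinearMap.id (γ') V) := by
    intro U V
    induction U using TensorProduct.induction_on with
    | zero => simp
    | tmul u₁ u₂ =>
        induction V using TensorProduct.induction_on with
        | zero => simp
        | tmul v₁ v₂ =>
            rw [ι12_tmul, ι13_tmul, Algebra.TensorProduct.tmul_mul_tmul,
              Algebra.TensorProduct.tmul_mul_tmul, Φ₂_tmul]
            simp [Algebra.TensorProduct.tmul_mul_tmul]
        | add u v hu hv => rw [map_add, mul_add, map_add, hu, hv, map_add, mul_add]
    | add u v hu hv => rw [map_add, add_mul, map_add, hu, hv, add_mul]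
  have hpr : pr1A k H Rinv = 1 := by
    have := congrArg (pr1A k H) hRinv
    rw [map_mul, map_one, pr1A_R k H R Rinv hRinv hR2, one_mul] at this
    exact this
  have key := congrArg (Φ₂ k H) (hex2_inv k H R Rinv hRinv hRinv' hR2)
  rw [h1, h2, hpr] at key
  calc TensorProduct.map LinearMap.id (γ') Rinv
      = (R * Rinv) * TensorProduct.map LinearMap.id (γ') Rinv := by rw [hRinv, one_mul]
    _ = R * (Rinv * TensorProduct.map LinearMap.id (γ') Rinv) := by rw [mul_assoc]
    _ = R * 1 := by rw [← key, Algebra.TensorProduct.one_def]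
    _ = R := mul_one R

lemma mapSS_R (R Rinv : H ⊗[k] H) (hRinv : R * Rinv = 1) (hRinv' : Rinv * R = 1)
    (hR1 : comulId k H R = ι13 k H R * ι23 k H R)
    (hR2 : idComul k H R = ι13 k H R * ι12 k H R) :
    TensorProduct.map (γ') (γ') R = R := by
  have h := congrArg (TensorProduct.map LinearMap.id (γ'))
    (mapSid_R k H R Rinv hRinv hR1)
  rw [mapidS_Rinv k H R Rinv hRinv hRinv' hR2] at h
  have h2 : ∀ W : H ⊗[k] H, TensorProduct.map LinearMap.id (γ')
      (TensorProduct.map (γ') LinearMap.id W) = TensorProduct.map (γ') (γ') W := by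
    intro W
    induction W using TensorProduct.induction_on with
    | zero => simp
    | tmul x y => simp
    | add u v hu hv => rw [map_add, map_add, hu, hv, map_add]
  rw [h2] at h
  exact h
lemma commA_eq (W : H ⊗[k] H) :
    (Algebra.TensorProduct.comm k H H) W = (TensorProduct.comm k H H) W := by
  induction W using TensorProduct.induction_on with
  | zero => simp
  | tmul x y => simp
  | add u v hu hv => rw [map_add, map_add, hu, hv]

lemma comm_comm (W : H ⊗[k] H) :
    (TensorProduct.comm k H H) ((TensorProduct.comm k H H) W) = W := by
  induction W using TensorProduct.induction_on with
  | zero => simp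
  | tmul x y => simp
  | add u v hu hv => rw [map_add, map_add, hu, hv]

lemma comm_mapidS (W : H ⊗[k] H) :
    (TensorProduct.comm k H H) (TensorProduct.map LinearMap.id (γ') W)
      = TensorProduct.map (γ') LinearMap.id ((TensorProduct.comm k H H) W) := by
  induction W using TensorProduct.induction_on with
  | zero => simp
  | tmul x y => simp
  | add u v hu hv => rw [map_add, map_add, hu, hv, map_add, map_add]

lemma comm_mapSS (W : H ⊗[k] H) :
    TensorProduct.map (γ') (γ') ((TensorProduct.comm k H H) W)
      = (TensorProduct.comm k H H) (TensorProduct.map (γ') (γ') W) := by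
  induction W using TensorProduct.induction_on with
  | zero => simp
  | tmul x y => simp
  | add u v hu hv => rw [map_add, map_add, hu, hv, map_add, map_add]

lemma mapSid_mapSS (W : H ⊗[k] H) :
    TensorProduct.map (γ') (γ') (TensorProduct.map (γ') LinearMap.id W)
      = TensorProduct.map (γ') LinearMap.id (TensorProduct.map (γ') (γ') W) := by
  induction W using TensorProduct.induction_on with
  | zero => simp
  | tmul x y => simp
  | add u v hu hv => rw [map_add, map_add, hu, hv, map_add, map_add]

private noncomputable def GS1 : H ⊗[k] H →ₗ[k] H :=
  LinearMap.mul' k H ∘ₗ TensorProduct.map (γ') ((γ') ∘ₗ (γ'))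

@[simp] lemma GS1_tmul (y z : H) : GS1 k H (y ⊗ₜ[k] z) = γ' y * γ' (γ' z) := by
  simp [GS1]

private noncomputable def GS2 : H ⊗[k] H →ₗ[k] H :=
  LinearMap.mul' k H ∘ₗ TensorProduct.map ((γ') ∘ₗ (γ')) (γ') ∘ₗ
    (TensorProduct.comm k H H).toLinearMap

@[simp] lemma GS2_tmul (y z : H) : GS2 k H (y ⊗ₜ[k] z) = γ' (γ' z) * γ' y := by
  simp [GS2]

private noncomputable def sandS (c : H) : H ⊗[k] H →ₗ[k] H :=
  LinearMap.mul' k H ∘ₗ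
    TensorProduct.map (LinearMap.mulRight k c ∘ₗ (γ')) ((γ') ∘ₗ (γ'))

@[simp] lemma sandS_tmul (c y z : H) :
    sandS k H c (y ⊗ₜ[k] z) = (γ' y * c) * γ' (γ' z) := by
  simp [sandS]

private noncomputable def sandS2c (c : H) : H ⊗[k] H →ₗ[k] H :=
  LinearMap.mul' k H ∘ₗ
    TensorProduct.map (LinearMap.mulRight k c ∘ₗ (γ') ∘ₗ (γ')) (γ')

@[simp] lemma sandS2c_tmul (c y z : H) :
    sandS2c k H c (y ⊗ₜ[k] z) = (γ' (γ' y) * c) * γ' z := by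
  simp [sandS2c]

lemma sandS_zero (W : H ⊗[k] H) : sandS k H 0 W = 0 := by
  induction W using TensorProduct.induction_on with
  | zero => simp
  | tmul y z => simp
  | add u v hu hv => rw [map_add, hu, hv, add_zero]

lemma sandS2c_zero (W : H ⊗[k] H) : sandS2c k H 0 W = 0 := by
  induction W using TensorProduct.induction_on with
  | zero => simp
  | tmul y z => simp
  | add u v hu hv => rw [map_add, hu, hv, add_zero]

lemma sandS_add (c c' : H) (W : H ⊗[k] H) :
    sandS k H (c + c') W = sandS k H c W + sandS k H c' W := by
  induction W using TensorProduct.induction_on with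
  | zero => simp
  | tmul y z => simp [mul_add, add_mul]
  | add u v hu hv => rw [map_add, hu, hv, map_add, map_add]; abel

lemma sandS_smul (r : k) (c : H) (W : H ⊗[k] H) :
    sandS k H (r • c) W = r • sandS k H c W := by
  induction W using TensorProduct.induction_on with
  | zero => simp
  | tmul y z => simp [mul_smul_comm, smul_mul_assoc]
  | add u v hu hv => rw [map_add, hu, hv, map_add, smul_add]

lemma sandS2c_add (c c' : H) (W : H ⊗[k] H) :
    sandS2c k H (c + c') W = sandS2c k H c W + sandS2c k H c' W := by
  induction W using TensorProduct.induction_on with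
  | zero => simp
  | tmul y z => simp [mul_add, add_mul]
  | add u v hu hv => rw [map_add, hu, hv, map_add, map_add]; abel

lemma sandS2c_smul (r : k) (c : H) (W : H ⊗[k] H) :
    sandS2c k H (r • c) W = r • sandS2c k H c W := by
  induction W using TensorProduct.induction_on with
  | zero => simp
  | tmul y z => simp [mul_smul_comm, smul_mul_assoc]
  | add u v hu hv => rw [map_add, hu, hv, map_add, smul_add]

lemma sandS_one (W : H ⊗[k] H) : sandS k H 1 W = GS1 k H W := by
  induction W using TensorProduct.induction_on with
  | zero => simp
  | tmul y z => simp
  | add u v hu hv => rw [map_add, hu, hv, map_add]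

lemma sandS2c_one (W : H ⊗[k] H) :
    sandS2c k H 1 W = GS2 k H ((TensorProduct.comm k H H) W) := by
  induction W using TensorProduct.induction_on with
  | zero => simp
  | tmul y z => simp
  | add u v hu hv => rw [map_add, hu, hv, map_add, map_add]

lemma keyF1 : ∀ P Q : H ⊗[k] H, GS1 k H (P * Q) = sandS k H (GS1 k H P) Q := by
  intro P Q
  induction P using TensorProduct.induction_on with
  | zero => simp [sandS_zero]
  | tmul p₁ p₂ =>
      induction Q using TensorProduct.induction_on with
      | zero => simp
      | tmul q₁ q₂ =>
          rw [Algebra.TensorProduct.tmul_mul_tmul, GS1_tmul, sandS_tmul, GS1_tmul]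
          simp [antipode_mul k H, mul_assoc]
      | add u v hu hv => rw [mul_add, map_add, hu, hv, map_add]
  | add u v hu hv =>
      rw [add_mul, map_add, hu, hv, map_add, sandS_add]

lemma keyF2 : ∀ P Q : H ⊗[k] H, GS2 k H (P * Q)
    = sandS2c k H (GS2 k H Q) ((TensorProduct.comm k H H) P) := by
  intro P Q
  induction P using TensorProduct.induction_on with
  | zero => simp [sandS2c_zero]
  | tmul p₁ p₂ =>
      induction Q using TensorProduct.induction_on with
      | zero => simp [sandS2c_zero]
      | tmul q₁ q₂ =>
          rw [Algebra.TensorProduct.tmul_mul_tmul, GS2_tmul, TensorProduct.comm_tmul,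
            sandS2c_tmul, GS2_tmul]
          simp [antipode_mul k H, mul_assoc]
      | add u v hu hv => rw [mul_add, map_add, hu, hv, map_add, sandS2c_add]
  | add u v hu hv =>
      rw [add_mul, map_add, hu, hv, map_add, map_add]
section R
variable (R Rinv : H ⊗[k] H)

lemma G1R (hRinv : R * Rinv = 1) (hRinv' : Rinv * R = 1)
    (hR1 : comulId k H R = ι13 k H R * ι23 k H R)
    (hR2 : idComul k H R = ι13 k H R * ι12 k H R) :
    GS1 k H R = μel k H R := by
  have h1 : ∀ W : H ⊗[k] H, GS1 k H W
      = LinearMap.mul' k H (TensorProduct.map LinearMap.id (γ')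
          (TensorProduct.map (γ') (γ') W)) := by
    intro W
    induction W using TensorProduct.induction_on with
    | zero => simp
    | tmul y z => simp
    | add u v hu hv => rw [map_add, hu, hv, map_add, map_add, map_add]
  rw [h1, mapSS_R k H R Rinv hRinv hRinv' hR1 hR2]
  rfl

lemma Sm (W : H ⊗[k] H) : γ' (LinearMap.mul' k H W)
    = LinearMap.mul' k H (TensorProduct.map (γ') (γ')
        ((TensorProduct.comm k H H) W)) := by
  induction W using TensorProduct.induction_on with
  | zero => simp
  | tmul x y => simp [antipode_mul k H]
  | add u v hu hv => rw [map_add, map_add, hu, hv, map_add, map_add, map_add]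

lemma uformR (hRinv : R * Rinv = 1) (hRinv' : Rinv * R = 1)
    (hR1 : comulId k H R = ι13 k H R * ι23 k H R)
    (hR2 : idComul k H R = ι13 k H R * ι12 k H R) :
    LinearMap.mul' k H (TensorProduct.map (γ') LinearMap.id
      ((TensorProduct.comm k H H) R)) = γ' (μel k H R) := by
  have h0 : μel k H R = LinearMap.mul' k H
      (TensorProduct.map LinearMap.id (γ') R) := rfl
  rw [h0, Sm, comm_mapidS]
  have h2 : ∀ W : H ⊗[k] H, TensorProduct.map (γ') (γ')
      (TensorProduct.map (γ') LinearMap.id W)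
      = TensorProduct.map (γ') LinearMap.id (TensorProduct.map (γ') (γ') W) := by
    intro W
    induction W using TensorProduct.induction_on with
    | zero => simp
    | tmul x y => simp
    | add u v hu hv => rw [map_add, map_add, hu, hv, map_add, map_add]
  rw [h2, comm_mapSS, mapSS_R k H R Rinv hRinv hRinv' hR1 hR2]

lemma G2R (hRinv : R * Rinv = 1) (hRinv' : Rinv * R = 1)
    (hR1 : comulId k H R = ι13 k H R * ι23 k H R)
    (hR2 : idComul k H R = ι13 k H R * ι12 k H R) :
    GS2 k H R = γ' (μel k H R) := by
  have h1 : ∀ W : H ⊗[k] H, GS2 k H W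
      = LinearMap.mul' k H (TensorProduct.map (γ') LinearMap.id
          (TensorProduct.map (γ') (γ') ((TensorProduct.comm k H H) W))) := by
    intro W
    induction W using TensorProduct.induction_on with
    | zero => simp
    | tmul y z => simp
    | add u v hu hv => rw [map_add, hu, hv, map_add, map_add, map_add, map_add]
  rw [h1, comm_mapSS, mapSS_R k H R Rinv hRinv hRinv' hR1 hR2,
    uformR k H R Rinv hRinv hRinv' hR1 hR2]

lemma G1comm (W : H ⊗[k] H) : GS1 k H ((TensorProduct.comm k H H) W)
    = γ' (LinearMap.mul' k H (TensorProduct.map (γ') LinearMap.id W)) := by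
  induction W using TensorProduct.induction_on with
  | zero => simp
  | tmul y z => simp [antipode_mul k H]
  | add u v hu hv => rw [map_add, map_add, hu, hv, map_add, map_add, map_add]

lemma G2val (W : H ⊗[k] H) : GS2 k H W
    = γ' (LinearMap.mul' k H (TensorProduct.map LinearMap.id (γ') W)) := by
  induction W using TensorProduct.induction_on with
  | zero => simp
  | tmul y z => simp [antipode_mul k H]
  | add u v hu hv => rw [map_add, hu, hv, map_add, map_add, map_add]

lemma P1 (hRinv : R * Rinv = 1) (hRinv' : Rinv * R = 1)
    (hcom : ∀ x : H, R * Δ k H x = (Algebra.TensorProduct.comm k H H) (Δ k H x) * R)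
    (hR1 : comulId k H R = ι13 k H R * ι23 k H R)
    (hR2 : idComul k H R = ι13 k H R * ι12 k H R) (x : H) :
    sandS k H (μel k H R) (comul (R := k) x) = counit (R := k) x • μel k H R := by
  have hΔ : Δ k H x = comul (R := k) x := rfl
  have hc := hcom x
  rw [hΔ, commA_eq] at hc
  have key := congrArg (GS1 k H) hc
  rw [keyF1, keyF1, G1R k H R Rinv hRinv hRinv' hR1 hR2, G1comm, mul_rTensor_antipode,
    HopfAlgebra.mul_antipode_rTensor_comul_apply, Algebra.algebraMap_eq_smul_one,
    map_smul, antipode_one, sandS_smul, sandS_one,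
    G1R k H R Rinv hRinv hRinv' hR1 hR2] at key
  exact key

lemma P2 (hRinv : R * Rinv = 1) (hRinv' : Rinv * R = 1)
    (hcom : ∀ x : H, R * Δ k H x = (Algebra.TensorProduct.comm k H H) (Δ k H x) * R)
    (hR1 : comulId k H R = ι13 k H R * ι23 k H R)
    (hR2 : idComul k H R = ι13 k H R * ι12 k H R) (x : H) :
    sandS2c k H (γ' (μel k H R)) (comul (R := k) x)
      = counit (R := k) x • γ' (μel k H R) := by
  have hΔ : Δ k H x = comul (R := k) x := rfl
  have hc := hcom x
  rw [hΔ, commA_eq] at hc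
  have key := congrArg (GS2 k H) hc
  rw [keyF2, keyF2, G2val k H (comul (R := k) x), mul_lTensor_antipode,
    HopfAlgebra.mul_antipode_lTensor_comul_apply, Algebra.algebraMap_eq_smul_one,
    map_smul, antipode_one, sandS2c_smul, sandS2c_one, comm_comm,
    G2R k H R Rinv hRinv hRinv' hR1 hR2, comm_comm] at key
  exact key.symm

lemma sum_pair {M : Type*} [AddCommMonoid M] [Module k M] {a : H} (r : Repr k a (H × H))
    (F : H ⊗[k] H →ₗ[k] M) :
    ∑ i ∈ r.index, F (r.left i ⊗ₜ[k] r.right i) = F (comul (R := k) a) := by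
  rw [← r.eq, map_sum]

lemma conj_mu (hRinv : R * Rinv = 1) (hRinv' : Rinv * R = 1)
    (hcom : ∀ x : H, R * Δ k H x = (Algebra.TensorProduct.comm k H H) (Δ k H x) * R)
    (hR1 : comulId k H R = ι13 k H R * ι23 k H R)
    (hR2 : idComul k H R = ι13 k H R * ι12 k H R) (x : H) :
    x * μel k H R = μel k H R * γ' (γ' x) := by
  have r := Repr.arbitrary k x
  have rl : (i : H × H) → Repr k (r.left i) (H × H) := fun i => Repr.arbitrary k _
  have rr : (i : H × H) → Repr k (r.right i) (H × H) := fun i => Repr.arbitrary k _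
  have step := sum_trip k H r rl rr
    (LinearMap.mul' k H ∘ₗ TensorProduct.map LinearMap.id (sandS k H (μel k H R)))
  simp only [LinearMap.coe_comp, Function.comp_apply, TensorProduct.map_tmul,
    LinearMap.id_coe, id_eq, LinearMap.mul'_apply, sandS_tmul] at step
  have hR' : ∀ i, (∑ j ∈ (rr i).index,
      r.left i * ((γ' ((rr i).left j) * μel k H R) * γ' (γ' ((rr i).right j))))
      = counit (R := k) (r.right i) • (r.left i * μel k H R) := by
    intro i
    rw [← Finset.mul_sum]
    have h : (∑ j ∈ (rr i).index,
        (γ' ((rr i).left j) * μel k H R) * γ' (γ' ((rr i).right j)))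
        = sandS k H (μel k H R) (comul (R := k) (r.right i)) := by
      rw [← sum_pair k H (rr i) (sandS k H (μel k H R))]
      exact Finset.sum_congr rfl fun j _ => (sandS_tmul k H _ _ _).symm
    rw [h, P1 k H R Rinv hRinv hRinv' hcom hR1 hR2, mul_smul_comm]
  have hL : ∀ i, (∑ j ∈ (rl i).index,
      (rl i).left j * ((γ' ((rl i).right j) * μel k H R) * γ' (γ' (r.right i))))
      = counit (R := k) (r.left i) • (μel k H R * γ' (γ' (r.right i))) := by
    intro i
    calc (∑ j ∈ (rl i).index,
          (rl i).left j * ((γ' ((rl i).right j) * μel k H R) * γ' (γ' (r.right i))))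
        = ∑ j ∈ (rl i).index,
            ((rl i).left j * γ' ((rl i).right j)) * (μel k H R * γ' (γ' (r.right i))) :=
          Finset.sum_congr rfl fun j _ => by simp [mul_assoc]
      _ = (∑ j ∈ (rl i).index, (rl i).left j * γ' ((rl i).right j)) *
            (μel k H R * γ' (γ' (r.right i))) := (Finset.sum_mul _ _ _).symm
      _ = algebraMap k H (counit (R := k) (r.left i)) *
            (μel k H R * γ' (γ' (r.right i))) := by
          rw [HopfAlgebra.sum_mul_antipode_eq_algebraMap_counit (rl i)]
      _ = counit (R := k) (r.left i) • (μel k H R * γ' (γ' (r.right i))) :=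
          (Algebra.smul_def _ _).symm
  have hRtot : (∑ i ∈ r.index, counit (R := k) (r.right i) • (r.left i * μel k H R))
      = x * μel k H R := by
    conv_rhs => rw [← repr_eps_right k H r, Finset.sum_mul]
    exact Finset.sum_congr rfl fun i _ => by rw [smul_mul_assoc]
  have hLtot : (∑ i ∈ r.index, counit (R := k) (r.left i) • (μel k H R * γ' (γ' (r.right i))))
      = μel k H R * γ' (γ' x) := by
    conv_rhs => rw [← repr_eps_left k H r, map_sum, map_sum, Finset.mul_sum]
    exact Finset.sum_congr rfl fun i _ => by rw [map_smul, map_smul, mul_smul_comm]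
  calc x * μel k H R
      = ∑ i ∈ r.index, counit (R := k) (r.right i) • (r.left i * μel k H R) := hRtot.symm
    _ = ∑ i ∈ r.index, ∑ j ∈ (rr i).index,
        r.left i * ((γ' ((rr i).left j) * μel k H R) * γ' (γ' ((rr i).right j))) :=
        (Finset.sum_congr rfl fun i _ => (hR' i).symm)
    _ = ∑ i ∈ r.index, ∑ j ∈ (rl i).index,
        (rl i).left j * ((γ' ((rl i).right j) * μel k H R) * γ' (γ' (r.right i))) :=
        step.symm
    _ = ∑ i ∈ r.index, counit (R := k) (r.left i) • (μel k H R * γ' (γ' (r.right i))) :=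
        Finset.sum_congr rfl fun i _ => hL i
    _ = μel k H R * γ' (γ' x) := hLtot

lemma conj_u (hRinv : R * Rinv = 1) (hRinv' : Rinv * R = 1)
    (hcom : ∀ x : H, R * Δ k H x = (Algebra.TensorProduct.comm k H H) (Δ k H x) * R)
    (hR1 : comulId k H R = ι13 k H R * ι23 k H R)
    (hR2 : idComul k H R = ι13 k H R * ι12 k H R) (x : H) :
    γ' (μel k H R) * x = γ' (γ' x) * γ' (μel k H R) := by
  have r := Repr.arbitrary k x
  have rl : (i : H × H) → Repr k (r.left i) (H × H) := fun i => Repr.arbitrary k _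
  have rr : (i : H × H) → Repr k (r.right i) (H × H) := fun i => Repr.arbitrary k _
  have step := sum_trip k H r rl rr
    (LinearMap.mul' k H ∘ₗ TensorProduct.map
      (LinearMap.mulRight k (γ' (μel k H R)) ∘ₗ (γ') ∘ₗ (γ'))
      (LinearMap.mul' k H ∘ₗ TensorProduct.map (γ') LinearMap.id))
  simp only [LinearMap.coe_comp, Function.comp_apply, TensorProduct.map_tmul,
    LinearMap.id_coe, id_eq, LinearMap.mul'_apply, LinearMap.mulRight_apply] at step
  have hL : ∀ i, (∑ j ∈ (rl i).index,
      (γ' (γ' ((rl i).left j)) * γ' (μel k H R)) * (γ' ((rl i).right j) * r.right i))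
      = counit (R := k) (r.left i) • (γ' (μel k H R) * r.right i) := by
    intro i
    calc (∑ j ∈ (rl i).index,
          (γ' (γ' ((rl i).left j)) * γ' (μel k H R)) * (γ' ((rl i).right j) * r.right i))
        = ∑ j ∈ (rl i).index,
            ((γ' (γ' ((rl i).left j)) * γ' (μel k H R)) * γ' ((rl i).right j)) * r.right i :=
          Finset.sum_congr rfl fun j _ => by simp [mul_assoc]
      _ = (∑ j ∈ (rl i).index,
            (γ' (γ' ((rl i).left j)) * γ' (μel k H R)) * γ' ((rl i).right j)) * r.right i :=
          (Finset.sum_mul _ _ _).symm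
      _ = sandS2c k H (γ' (μel k H R)) (comul (R := k) (r.left i)) * r.right i := by
          rw [← sum_pair k H (rl i) (sandS2c k H (γ' (μel k H R)))]
          try congr 1
          try exact Finset.sum_congr rfl fun j _ => (sandS2c_tmul k H _ _ _).symm
      _ = counit (R := k) (r.left i) • (γ' (μel k H R) * r.right i) := by
          rw [P2 k H R Rinv hRinv hRinv' hcom hR1 hR2, smul_mul_assoc]
  have hR' : ∀ i, (∑ j ∈ (rr i).index,
      (γ' (γ' (r.left i)) * γ' (μel k H R)) * (γ' ((rr i).left j) * (rr i).right j))
      = counit (R := k) (r.right i) • (γ' (γ' (r.left i)) * γ' (μel k H R)) := by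
    intro i
    rw [← Finset.mul_sum, HopfAlgebra.sum_antipode_mul_eq_algebraMap_counit (rr i), ← Algebra.commutes,
      ← Algebra.smul_def]
  have hLtot : (∑ i ∈ r.index, counit (R := k) (r.left i) • (γ' (μel k H R) * r.right i))
      = γ' (μel k H R) * x := by
    conv_rhs => rw [← repr_eps_left k H r, Finset.mul_sum]
    exact Finset.sum_congr rfl fun i _ => by rw [mul_smul_comm]
  have hRtot : (∑ i ∈ r.index,
      counit (R := k) (r.right i) • (γ' (γ' (r.left i)) * γ' (μel k H R)))
      = γ' (γ' x) * γ' (μel k H R) := by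
    conv_rhs => rw [← repr_eps_right k H r, map_sum, map_sum, Finset.sum_mul]
    exact Finset.sum_congr rfl fun i _ => by rw [map_smul, map_smul, smul_mul_assoc]
  calc γ' (μel k H R) * x
      = ∑ i ∈ r.index, counit (R := k) (r.left i) • (γ' (μel k H R) * r.right i) :=
        hLtot.symm
    _ = ∑ i ∈ r.index, ∑ j ∈ (rl i).index,
        (γ' (γ' ((rl i).left j)) * γ' (μel k H R)) * (γ' ((rl i).right j) * r.right i) :=
        (Finset.sum_congr rfl fun i _ => (hL i).symm)
    _ = ∑ i ∈ r.index, ∑ j ∈ (rr i).index,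
        (γ' (γ' (r.left i)) * γ' (μel k H R)) * (γ' ((rr i).left j) * (rr i).right j) :=
        step
    _ = ∑ i ∈ r.index,
        counit (R := k) (r.right i) • (γ' (γ' (r.left i)) * γ' (μel k H R)) :=
        Finset.sum_congr rfl fun i _ => hR' i
    _ = γ' (γ' x) * γ' (μel k H R) := hRtot

private noncomputable def sand (c : H) : H ⊗[k] H →ₗ[k] H :=
  LinearMap.mul' k H ∘ₗ TensorProduct.map (LinearMap.mulRight k c) LinearMap.id

@[simp] lemma sand_tmul (c y z : H) : sand k H c (y ⊗ₜ[k] z) = (y * c) * z := by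
  simp [sand]

lemma sand_zero (W : H ⊗[k] H) : sand k H 0 W = 0 := by
  induction W using TensorProduct.induction_on with
  | zero => simp
  | tmul y z => simp
  | add u v hu hv => rw [map_add, hu, hv, add_zero]

lemma sand_add (c c' : H) (W : H ⊗[k] H) :
    sand k H (c + c') W = sand k H c W + sand k H c' W := by
  induction W using TensorProduct.induction_on with
  | zero => simp
  | tmul y z => simp [mul_add, add_mul]
  | add u v hu hv => rw [map_add, hu, hv, map_add, map_add]; abel

private noncomputable def N₂ : H ⊗[k] (H ⊗[k] H) →ₗ[k] H :=
  LinearMap.mul' k H ∘ₗ TensorProduct.map LinearMap.id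
    (LinearMap.mul' k H ∘ₗ TensorProduct.map (γ') LinearMap.id)

@[simp] lemma N₂_tmul (x : H) (W : H ⊗[k] H) :
    N₂ k H (x ⊗ₜ[k] W)
      = x * LinearMap.mul' k H (TensorProduct.map (γ') LinearMap.id W) := by
  simp [N₂]

private noncomputable def N₃ : H ⊗[k] (H ⊗[k] H) →ₗ[k] H :=
  LinearMap.mul' k H ∘ₗ TensorProduct.map
    (LinearMap.mul' k H ∘ₗ TensorProduct.map LinearMap.id (γ')) LinearMap.id ∘ₗ
    (TensorProduct.comm k H (H ⊗[k] H)).toLinearMap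

@[simp] lemma N₃_tmul (x : H) (W : H ⊗[k] H) :
    N₃ k H (x ⊗ₜ[k] W)
      = LinearMap.mul' k H (TensorProduct.map LinearMap.id (γ') W) * x := by
  simp [N₃]

lemma N₂_idComul (P : H ⊗[k] H) : N₂ k H (idComul k H P) = pr1A k H P := by
  induction P using TensorProduct.induction_on with
  | zero => simp
  | tmul a b =>
      rw [idComul_tmul, N₂_tmul, mul_rTensor_antipode,
        HopfAlgebra.mul_antipode_rTensor_comul_apply, ← Algebra.commutes,
        ← Algebra.smul_def, pr1A_tmul]
  | add u v hu hv => rw [map_add, map_add, hu, hv, map_add]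

lemma N₃_idComul (P : H ⊗[k] H) : N₃ k H (idComul k H P) = pr1A k H P := by
  induction P using TensorProduct.induction_on with
  | zero => simp
  | tmul a b =>
      rw [idComul_tmul, N₃_tmul, mul_lTensor_antipode,
        HopfAlgebra.mul_antipode_lTensor_comul_apply, ← Algebra.smul_def, pr1A_tmul]
  | add u v hu hv => rw [map_add, map_add, hu, hv, map_add]

lemma N₂_prod (U V : H ⊗[k] H) : N₂ k H (ι13 k H U * ι12 k H V)
    = sand k H (LinearMap.mul' k H (TensorProduct.map LinearMap.id (γ') V)) U := by
  induction U using TensorProduct.induction_on with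
  | zero => simp
  | tmul u₁ u₂ =>
      induction V using TensorProduct.induction_on with
      | zero => simp [sand_zero]
      | tmul v₁ v₂ =>
          rw [ι13_tmul, ι12_tmul, Algebra.TensorProduct.tmul_mul_tmul,
            Algebra.TensorProduct.tmul_mul_tmul, N₂_tmul]
          simp [mul_assoc]
      | add p q hp hq =>
          rw [map_add, mul_add, map_add, hp, hq, map_add, map_add, sand_add]
  | add p q hp hq => rw [map_add, add_mul, map_add, hp, hq, map_add]

lemma N₃_prod (U V : H ⊗[k] H) : N₃ k H (ι13 k H U * ι12 k H V)
    = sand k H (LinearMap.mul' k H (TensorProduct.map (γ') LinearMap.id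
        ((TensorProduct.comm k H H) U))) ((TensorProduct.comm k H H) V) := by
  induction U using TensorProduct.induction_on with
  | zero => simp [sand_zero]
  | tmul u₁ u₂ =>
      induction V using TensorProduct.induction_on with
      | zero => simp
      | tmul v₁ v₂ =>
          rw [ι13_tmul, ι12_tmul, Algebra.TensorProduct.tmul_mul_tmul,
            Algebra.TensorProduct.tmul_mul_tmul, N₃_tmul, TensorProduct.comm_tmul,
            TensorProduct.comm_tmul]
          simp [mul_assoc]
      | add p q hp hq => rw [map_add, mul_add, map_add, hp, hq, map_add, map_add]
  | add p q hp hq =>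
      rw [map_add, add_mul, map_add, hp, hq, map_add, map_add, map_add, sand_add]

lemma sand_mu_R (hRinv : R * Rinv = 1) (hRinv' : Rinv * R = 1)
    (hR2 : idComul k H R = ι13 k H R * ι12 k H R) :
    sand k H (μel k H R) R = 1 := by
  have h0 : μel k H R = LinearMap.mul' k H (TensorProduct.map LinearMap.id (γ') R) := rfl
  rw [h0, ← N₂_prod, ← hR2, N₂_idComul, pr1A_R k H R Rinv hRinv hR2]

lemma sand_u_commR (hRinv : R * Rinv = 1) (hRinv' : Rinv * R = 1)
    (hR1 : comulId k H R = ι13 k H R * ι23 k H R)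
    (hR2 : idComul k H R = ι13 k H R * ι12 k H R) :
    sand k H (γ' (μel k H R)) ((TensorProduct.comm k H H) R) = 1 := by
  rw [← uformR k H R Rinv hRinv hRinv' hR1 hR2, ← N₃_prod, ← hR2, N₃_idComul,
    pr1A_R k H R Rinv hRinv hR2]

lemma S_comp_Sinv (hγ : Function.Bijective (γ')) (x : H) :
    γ' ((LinearEquiv.ofBijective (γ') hγ).symm x) = x :=
  (LinearEquiv.ofBijective (γ') hγ).apply_symm_apply x

theorem main (hRinv : R * Rinv = 1) (hRinv' : Rinv * R = 1)
    (hcom : ∀ x : H, R * Δ k H x = (Algebra.TensorProduct.comm k H H) (Δ k H x) * R)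
    (hR1 : comulId k H R = ι13 k H R * ι23 k H R)
    (hR2 : idComul k H R = ι13 k H R * ι12 k H R)
    (hγ : Function.Bijective (γ')) :
    IsUnit (μel k H R) ∧ ∀ x : H, μel k H R * γ' (γ' x) = x * μel k H R := by
  set Si := ((LinearEquiv.ofBijective (γ') hγ).symm : H →ₗ[k] H) with hSi
  have hSS : ∀ x : H, γ' (Si x) = x := fun x => S_comp_Sinv k H hγ x
  -- left inverse z
  have hz : ∀ Q : H ⊗[k] H,
      LinearMap.mul' k H (TensorProduct.map LinearMap.id (Si ∘ₗ Si) Q) * μel k H R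
        = sand k H (μel k H R) Q := by
    intro Q
    induction Q using TensorProduct.induction_on with
    | zero => simp
    | tmul q₁ q₂ =>
        simp only [TensorProduct.map_tmul, LinearMap.id_coe, id_eq, LinearMap.coe_comp,
          Function.comp_apply, LinearMap.mul'_apply, sand_tmul]
        have h := conj_mu k H R Rinv hRinv hRinv' hcom hR1 hR2 (Si (Si q₂))
        rw [hSS, hSS] at h
        rw [mul_assoc, h, ← mul_assoc]
    | add p q hp hq => rw [map_add, map_add, add_mul, hp, hq, map_add]
  have h1 : LinearMap.mul' k H (TensorProduct.map LinearMap.id (Si ∘ₗ Si) R) * μel k H R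
      = 1 := by
    rw [hz, sand_mu_R k H R Rinv hRinv hRinv' hR2]
  -- right inverse via u = γ' μ
  have hv : ∀ Q : H ⊗[k] H,
      LinearMap.mul' k H (TensorProduct.map LinearMap.id ((γ') ∘ₗ (γ')) Q) * γ' (μel k H R)
        = sand k H (γ' (μel k H R)) Q := by
    intro Q
    induction Q using TensorProduct.induction_on with
    | zero => simp
    | tmul q₁ q₂ =>
        simp only [TensorProduct.map_tmul, LinearMap.id_coe, id_eq, LinearMap.coe_comp,
          Function.comp_apply, LinearMap.mul'_apply, sand_tmul]
        have h := conj_u k H R Rinv hRinv hRinv' hcom hR1 hR2 q₂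
        rw [mul_assoc, ← h, ← mul_assoc]
    | add p q hp hq => rw [map_add, map_add, add_mul, hp, hq, map_add]
  have h2 : LinearMap.mul' k H (TensorProduct.map LinearMap.id ((γ') ∘ₗ (γ'))
      ((TensorProduct.comm k H H) R)) * γ' (μel k H R) = 1 := by
    rw [hv, sand_u_commR k H R Rinv hRinv hRinv' hR1 hR2]
  set v := LinearMap.mul' k H (TensorProduct.map LinearMap.id ((γ') ∘ₗ (γ'))
    ((TensorProduct.comm k H H) R)) with hvdef
  set z := LinearMap.mul' k H (TensorProduct.map LinearMap.id (Si ∘ₗ Si) R) with hzdef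
  have h3 : μel k H R * Si v = 1 := by
    apply hγ.1
    rw [antipode_mul k H, hSS, h2, antipode_one]
  have h4 : Si v * μel k H R = 1 := by
    have : z = Si v := by
      calc z = z * (μel k H R * Si v) := by rw [h3, mul_one]
        _ = (z * μel k H R) * Si v := by rw [mul_assoc]
        _ = Si v := by rw [h1, one_mul]
    rw [← this, h1]
  refine ⟨⟨⟨μel k H R, Si v, h3, h4⟩, rfl⟩, fun x => ?_⟩
  exact (conj_mu k H R Rinv hRinv hRinv' hcom hR1 hR2 x).symm

end R

/-- For a quasitriangular Hopf algebra `(H, R)`, the element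
`μ = Σ R⁽¹⁾ γ(R⁽²⁾)` is invertible and satisfies `μ γ²(x) = x μ` for all `x`, i.e.
conjugation by `μ` implements the inverse of the squared antipode. -/
theorem mu_implements_inverse_square_antipode (R Rinv : H ⊗[k] H)
    (hRinv : R * Rinv = 1) (hRinv' : Rinv * R = 1)
    (hcom : ∀ x : H, R * Δ k H x = (Algebra.TensorProduct.comm k H H) (Δ k H x) * R)
    (hR1 : comulId k H R = ι13 k H R * ι23 k H R)
    (hR2 : idComul k H R = ι13 k H R * ι12 k H R)
    (hγ : Function.Bijective (γ k H)) :
    IsUnit (μel k H R) ∧ ∀ x : H, μel k H R * γ k H (γ k H x) = x * μel k H R := by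
  exact main k H R Rinv hRinv hRinv' hcom hR1 hR2 hγ

end Stmt5
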